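/- arXiv:2302.13220 — 2 statements merged into one kernel-verified Lean document; each statement's English description precedes it below -/
import Mathlib

section
/- Let G be an ADMG, let I and X be vertex sets, and let k ≥ 1. Suppose there exists at least one k-tuple of treks, each from a vertex of I to a vertex of X, no two of which have a same-sided intersection. Let (π_1, …, π_k) be such a k-tuple of minimal total length, and define π_a ≼ π_b if and only if a ≠ b and some vertex lies on the left side of π_a and on the right side of π_b. Then ≼ has no cycle: there is no sequence of distinct indices j_1, …, j_l with l ≥ 2 such that π_{j_1} ≼ π_{j_2} ≼ … ≼ π_{j_l} ≼ π_{j_1}. -/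
open Classical

/-- A mixed graph: directed arrows `dir` and bidirected arrows `bi`
(symmetric and irreflexive). -/
structure MixedGraph (V : Type) where
  dir : V → V → Prop
  bi : V → V → Prop
  bi_symm : ∀ u v, bi u v → bi v u
  bi_irrefl : ∀ v, ¬ bi v v

variable {V : Type}

/-- An ADMG is a mixed graph with no directed cycle. -/
def MixedGraph.Acyclic (G : MixedGraph V) : Prop :=
  ∀ v, ¬ Relation.TransGen G.dir v v

/-- A trek: a pair of directed paths (given as nonempty lists of vertices,
each starting at a "top") whose tops either coincide (case (i)) or are
joined by a bidirected arrow (case (ii)).  The left path ends at the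
trek's source and the right path ends at its destination. -/
structure Trek (G : MixedGraph V) where
  left : List V
  right : List V
  left_ne : left ≠ []
  right_ne : right ≠ []
  left_chain : left.Chain' G.dir
  right_chain : right.Chain' G.dir
  top_ok : left.head left_ne = right.head right_ne ∨
    G.bi (left.head left_ne) (right.head right_ne)

namespace Trek

variable {G : MixedGraph V}

/-- The left endpoint of a trek. -/
def src (t : Trek G) : V := t.left.getLast t.left_ne

/-- The right endpoint of a trek. -/
def dst (t : Trek G) : V := t.right.getLast t.right_ne

/-- `v` lies on the left side of the trek. -/
def onLeft (t : Trek G) (v : V) : Prop := v ∈ t.left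

/-- `v` lies on the right side of the trek. -/
def onRight (t : Trek G) (v : V) : Prop := v ∈ t.right

/-- The number of arrows of a trek (counting the bidirected arrow if the
tops differ). -/
noncomputable def length (t : Trek G) : ℕ :=
  (t.left.length - 1) + (t.right.length - 1) +
    (if t.left.head t.left_ne = t.right.head t.right_ne then 0 else 1)

/-- Two treks have a same-sided intersection if some vertex lies on both
their left sides or on both their right sides. -/
def SameSided (t₁ t₂ : Trek G) : Prop :=
  ∃ v, (t₁.onLeft v ∧ t₂.onLeft v) ∨ (t₁.onRight v ∧ t₂.onRight v)

end Trek

/-- `(L, R)` t-separates the vertex sets `A` and `B`. -/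
def TSep (G : MixedGraph V) (L R : Finset V) (A B : Set V) : Prop :=
  ∀ t : Trek G, t.src ∈ A → t.dst ∈ B →
    (∃ v ∈ L, t.onLeft v) ∨ (∃ v ∈ R, t.onRight v)

/-- The graph obtained by deleting all arrows from a vertex of `X` to `y`. -/
def MixedGraph.removeOut (G : MixedGraph V) (X : Set V) (y : V) : MixedGraph V where
  dir u v := G.dir u v ∧ ¬ (u ∈ X ∧ v = y)
  bi := G.bi
  bi_symm := G.bi_symm
  bi_irrefl := G.bi_irrefl

/-- Cyclic successor on `Fin l`. -/
def cycSucc (l : ℕ) (hl : 0 < l) (m : Fin l) : Fin l :=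
  ⟨(m.val + 1) % l, Nat.mod_lt _ hl⟩


/- A cycle π_{j_1} ≼ ⋯ ≼ π_{j_l} ≼ π_{j_1} lets one reroute every π_{j_m} at its shared vertex
with π_{j_{m+1}}: keep the part of the left side of π_{j_m} below that vertex and the part of
the right side of π_{j_{m+1}} below it. Left sides only shrink and right sides are only
permuted among the treks, so no same-sided intersection appears, and the left and right path
lengths can only drop while the bidirected arrows of the cycle disappear. By minimality nothing
may drop; but then the vertex shared by π_{j_m} and π_{j_{m+1}} is the common top of
π_{j_{m+1}}, hence lies on the left sides of both. -/

namespace List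

variable {α : Type*} [DecidableEq α] {l : List α} {a : α}

theorem dropWhile_ne_ne_nil (h : a ∈ l) : l.dropWhile (· ≠ a) ≠ [] := by
  rw [Ne, dropWhile_eq_nil_iff]
  exact fun hall => by simpa using hall a h

theorem head_dropWhile_ne (h : a ∈ l) :
    (l.dropWhile (· ≠ a)).head (dropWhile_ne_ne_nil h) = a := by
  simpa using head_dropWhile_not (fun x => decide (x ≠ a)) (dropWhile_ne_ne_nil h)

theorem head_eq_of_length_le_length_dropWhile_ne (h : a ∈ l)
    (hlen : l.length ≤ (l.dropWhile (· ≠ a)).length) (hl : l ≠ []) : l.head hl = a := by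
  have hdrop : l.dropWhile (· ≠ a) = l := (dropWhile_suffix _).eq_of_length_le hlen
  simpa only [hdrop] using head_dropWhile_ne h

end List

namespace Trek

variable {G : MixedGraph V}

def Precedes (s t : Trek G) : Prop := ∃ v, s.onLeft v ∧ t.onRight v

theorem length_left_add_length_right_le (t : Trek G) :
    (t.left.length - 1) + (t.right.length - 1) ≤ t.length := by
  unfold length
  split <;> omega

noncomputable def splice {s t : Trek G} (h : s.Precedes t) : Trek G where
  left := s.left.dropWhile (· ≠ h.choose)
  right := t.right.dropWhile (· ≠ h.choose)
  left_ne := List.dropWhile_ne_ne_nil h.choose_spec.1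
  right_ne := List.dropWhile_ne_ne_nil h.choose_spec.2
  left_chain := s.left_chain.suffix (List.dropWhile_suffix _)
  right_chain := t.right_chain.suffix (List.dropWhile_suffix _)
  top_ok := Or.inl <| by
    rw [List.head_dropWhile_ne h.choose_spec.1, List.head_dropWhile_ne h.choose_spec.2]

variable {s t : Trek G} (h : s.Precedes t)

theorem splice_left_suffix : (splice h).left <:+ s.left := List.dropWhile_suffix _

theorem splice_right_suffix : (splice h).right <:+ t.right := List.dropWhile_suffix _

theorem src_splice : (splice h).src = s.src :=
  (splice_left_suffix h).getLast _

theorem dst_splice : (splice h).dst = t.dst :=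
  (splice_right_suffix h).getLast _

theorem head_left_splice : (splice h).left.head (splice h).left_ne = h.choose :=
  List.head_dropWhile_ne h.choose_spec.1

theorem head_right_splice : (splice h).right.head (splice h).right_ne = h.choose :=
  List.head_dropWhile_ne h.choose_spec.2

theorem length_splice :
    (splice h).length = ((splice h).left.length - 1) + ((splice h).right.length - 1) := by
  rw [length, if_pos (by rw [head_left_splice, head_right_splice]), Nat.add_zero]

theorem length_splice_add_le :
    (splice h).length + (s.right.length - 1) ≤ s.length + (t.right.length - 1) := by
  have hl := (splice_left_suffix h).length_le
  have hr := (splice_right_suffix h).length_le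
  have hs := s.length_left_add_length_right_le
  rw [length_splice]
  omega

/-- Equality in `length_splice_add_le` means that nothing was cut off and `s` has a common top. -/
theorem head_eq_of_length_splice_add_eq
    (heq : (splice h).length + (s.right.length - 1) = s.length + (t.right.length - 1)) :
    s.left.head s.left_ne = s.right.head s.right_ne ∧ t.right.head t.right_ne ∈ s.left := by
  have hl := (splice_left_suffix h).length_le
  have hr := (splice_right_suffix h).length_le
  have hl₀ := List.length_pos_iff.mpr (splice h).left_ne
  have hr₀ := List.length_pos_iff.mpr (splice h).right_ne
  have hs := s.length_left_add_length_right_le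
  rw [length_splice] at heq
  have hs_top : s.left.head s.left_ne = s.right.head s.right_ne := by
    by_contra hne
    rw [length, if_neg hne] at heq
    omega
  rw [length, if_pos hs_top] at heq
  have hleft : s.left.head s.left_ne = h.choose :=
    List.head_eq_of_length_le_length_dropWhile_ne h.choose_spec.1
      (show s.left.length ≤ (splice h).left.length by omega) _
  have hright : t.right.head t.right_ne = h.choose :=
    List.head_eq_of_length_le_length_dropWhile_ne h.choose_spec.2
      (show t.right.length ≤ (splice h).right.length by omega) _
  exact ⟨hs_top, hright ▸ hleft ▸ List.head_mem _⟩

section Reroute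

variable {ι : Type*} (π : ι → Trek G) (σ : Equiv.Perm ι)
  (hprec : ∀ a, σ a ≠ a → (π a).Precedes (π (σ a)))

noncomputable def reroute (a : ι) : Trek G :=
  if ha : σ a = a then π a else splice (hprec a ha)

theorem reroute_of_ne {a : ι} (ha : σ a ≠ a) : reroute π σ hprec a = splice (hprec a ha) :=
  dif_neg ha

theorem reroute_of_eq {a : ι} (ha : σ a = a) : reroute π σ hprec a = π a :=
  dif_pos ha

theorem src_reroute (a : ι) : (reroute π σ hprec a).src = (π a).src := by
  by_cases ha : σ a = a
  · rw [reroute_of_eq π σ hprec ha]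
  · rw [reroute_of_ne π σ hprec ha, src_splice]

theorem dst_reroute (a : ι) : (reroute π σ hprec a).dst = (π (σ a)).dst := by
  by_cases ha : σ a = a
  · rw [reroute_of_eq π σ hprec ha, ha]
  · rw [reroute_of_ne π σ hprec ha, dst_splice]

theorem left_reroute_subset (a : ι) : (reroute π σ hprec a).left ⊆ (π a).left := by
  by_cases ha : σ a = a
  · rw [reroute_of_eq π σ hprec ha]
    exact List.Subset.refl _
  · rw [reroute_of_ne π σ hprec ha]
    exact (splice_left_suffix _).subset

theorem right_reroute_subset (a : ι) : (reroute π σ hprec a).right ⊆ (π (σ a)).right := by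
  by_cases ha : σ a = a
  · rw [reroute_of_eq π σ hprec ha, ha]
    exact List.Subset.refl _
  · rw [reroute_of_ne π σ hprec ha]
    exact (splice_right_suffix _).subset

theorem not_sameSided_reroute (hss : ∀ a b, a ≠ b → ¬ SameSided (π a) (π b))
    {a b : ι} (hab : a ≠ b) : ¬ SameSided (reroute π σ hprec a) (reroute π σ hprec b) := by
  rintro ⟨x, ⟨hxa, hxb⟩ | ⟨hxa, hxb⟩⟩
  · exact hss a b hab
      ⟨x, .inl ⟨left_reroute_subset π σ hprec a hxa, left_reroute_subset π σ hprec b hxb⟩⟩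
  · exact hss (σ a) (σ b) (σ.injective.ne hab)
      ⟨x, .inr ⟨right_reroute_subset π σ hprec a hxa, right_reroute_subset π σ hprec b hxb⟩⟩

theorem length_reroute_add_le (a : ι) :
    (reroute π σ hprec a).length + ((π a).right.length - 1) ≤
      (π a).length + ((π (σ a)).right.length - 1) := by
  by_cases ha : σ a = a
  · rw [reroute_of_eq π σ hprec ha, ha]
  · rw [reroute_of_ne π σ hprec ha]
    exact length_splice_add_le _

theorem exists_length_reroute_add_lt (hss : ∀ a b, a ≠ b → ¬ SameSided (π a) (π b))
    (hσ : σ ≠ 1) :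
    ∃ a, (reroute π σ hprec a).length + ((π a).right.length - 1) <
      (π a).length + ((π (σ a)).right.length - 1) := by
  by_contra! htight
  have heq a := (length_reroute_add_le π σ hprec a).antisymm (htight a)
  obtain ⟨a, ha⟩ : ∃ a, σ a ≠ a := by
    by_contra! h
    exact hσ (Equiv.ext h)
  have hb : σ (σ a) ≠ σ a := σ.injective.ne ha
  have hcut := (head_eq_of_length_splice_add_eq _ (reroute_of_ne π σ hprec ha ▸ heq a)).2
  have htop := (head_eq_of_length_splice_add_eq _ (reroute_of_ne π σ hprec hb ▸ heq (σ a))).1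
  exact hss a (σ a) ha.symm ⟨_, .inl ⟨htop ▸ hcut, List.head_mem _⟩⟩

theorem sum_length_reroute_lt [Fintype ι] (hss : ∀ a b, a ≠ b → ¬ SameSided (π a) (π b))
    (hσ : σ ≠ 1) : ∑ a, (reroute π σ hprec a).length < ∑ a, (π a).length := by
  obtain ⟨a, ha⟩ := exists_length_reroute_add_lt π σ hprec hss hσ
  have hsum := Finset.sum_lt_sum (fun a _ => length_reroute_add_le π σ hprec a)
    ⟨a, Finset.mem_univ a, ha⟩
  rw [Finset.sum_add_distrib, Finset.sum_add_distrib,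
    Equiv.sum_comp σ (fun a => (π a).right.length - 1)] at hsum
  omega

end Reroute

end Trek

theorem cycSucc_eq_finRotate (l : ℕ) (hl : 0 < l) : cycSucc l hl = finRotate l := by
  funext m
  ext
  rw [finRotate_apply, Fin.val_add, Fin.val_one', Nat.add_mod_mod]
  rfl

/-- a minimal-total-length system of treks from `I` to `X`
without same-sided intersections admits no cycle in the precedence relation
`π a ≼ π b ⟺ a ≠ b ∧ some vertex is on the left side of π a and the right
side of π b`. -/
theorem minimal_trek_system_precedence_has_no_cycle
    {V : Type} (G : MixedGraph V) (I X : Set V)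
    (k : ℕ) (π : Fin k → Trek G)
    (hmem : ∀ a : Fin k, (π a).src ∈ I ∧ (π a).dst ∈ X)
    (hss : ∀ a b : Fin k, a ≠ b → ¬ Trek.SameSided (π a) (π b))
    (hmin : ∀ π' : Fin k → Trek G, (∀ a : Fin k, (π' a).src ∈ I ∧ (π' a).dst ∈ X) →
      (∀ a b : Fin k, a ≠ b → ¬ Trek.SameSided (π' a) (π' b)) →
      (∑ a : Fin k, (π a).length) ≤ ∑ a : Fin k, (π' a).length) :
    ¬ ∃ (l : ℕ) (hl : 2 ≤ l) (j : Fin l → Fin k), Function.Injective j ∧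
        ∀ m : Fin l,
          j m ≠ j (cycSucc l (by omega) m) ∧
          ∃ v, (π (j m)).onLeft v ∧ (π (j (cycSucc l (by omega) m))).onRight v := by
  rintro ⟨l, hl, j, hinj, hcyc⟩
  simp only [cycSucc_eq_finRotate] at hcyc
  set σ := (finRotate l).viaEmbedding ⟨j, hinj⟩
  have hσj m : σ (j m) = j (finRotate l m) := (finRotate l).viaEmbedding_apply ⟨j, hinj⟩ m
  have hprec a (ha : σ a ≠ a) : (π a).Precedes (π (σ a)) := by
    by_cases hj : a ∈ Set.range j
    · obtain ⟨m, rfl⟩ := hj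
      exact hσj m ▸ (hcyc m).2
    · exact absurd ((finRotate l).viaEmbedding_apply_of_notMem ⟨j, hinj⟩ a hj) ha
  have hσ : σ ≠ 1 := fun h1 => (hcyc ⟨0, by omega⟩).1 (by rw [← hσj, h1]; rfl)
  refine (hmin (Trek.reroute π σ hprec) (fun a => ?_)
    (fun _ _ => Trek.not_sameSided_reroute π σ hprec hss)).not_gt
    (Trek.sum_length_reroute_lt π σ hprec hss hσ)
  rw [Trek.src_reroute, Trek.dst_reroute]
  exact ⟨(hmem a).1, (hmem (σ a)).2⟩
end

section
/- Let G be a directed acyclic graph on V = Fin n, let y ∈ V, let X ⊆ Pa_G(y), and let i ∈ V. If there is no trek from i to y in the graph G_{X̄} obtained from G by deleting all arrows from a vertex of X to y, then for every matrix Λ supported on the arrows of G and every diagonal matrix Φ with positive diagonal entries, the covariance of variable i with the composite error of the equation of y vanishes: Σ_{p ∈ Pa_G(y) \ X} Λ[p,y]·Σ[i,p] + ((I − Λ)⁻ᵀΦ)[i,y] = 0, where Σ = (I − Λ)⁻ᵀ Φ (I − Λ)⁻¹. -/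
open Classical Matrix

/-- A trek in a directed graph given by the arrow relation `E`: a pair of
directed paths (nonempty lists of vertices) from a common top vertex. -/
structure DTrek {n : ℕ} (E : Fin n → Fin n → Prop) where
  left : List (Fin n)
  right : List (Fin n)
  left_ne : left ≠ []
  right_ne : right ≠ []
  left_chain : left.Chain' E
  right_chain : right.Chain' E
  top_eq : left.head left_ne = right.head right_ne

namespace DTrek

variable {n : ℕ} {E : Fin n → Fin n → Prop}

/-- The top of a trek. -/
def top (t : DTrek E) : Fin n := t.left.head t.left_ne

/-- The left endpoint of a trek. -/
def src (t : DTrek E) : Fin n := t.left.getLast t.left_ne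

/-- The right endpoint of a trek. -/
def dst (t : DTrek E) : Fin n := t.right.getLast t.right_ne

end DTrek

/-- `(L, R)` t-separates the vertex sets `A` and `B` in the directed graph `E`:
every trek from `A` to `B` has a vertex of `L` on its left side or a vertex of
`R` on its right side. -/
def DTSep {n : ℕ} (E : Fin n → Fin n → Prop) (L R : Finset (Fin n))
    (A B : Set (Fin n)) : Prop :=
  ∀ t : DTrek E, t.src ∈ A → t.dst ∈ B →
    (∃ v ∈ L, v ∈ t.left) ∨ (∃ v ∈ R, v ∈ t.right)

/-- The directed graph `E` is acyclic. -/
def EAcyclic {n : ℕ} (E : Fin n → Fin n → Prop) : Prop :=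
  ∀ v, ¬ Relation.TransGen E v v

/-- `Λ` is supported on the arrows of `E`. -/
def SupportedOn {n : ℕ} (E : Fin n → Fin n → Prop)
    (Λ : Matrix (Fin n) (Fin n) ℝ) : Prop :=
  ∀ u v, ¬ E u v → Λ u v = 0

/-- The implied covariance matrix `Σ = (I − Λ)⁻ᵀ Φ (I − Λ)⁻¹` of an SEM. -/
noncomputable def impliedCov {n : ℕ} (Λ Φ : Matrix (Fin n) (Fin n) ℝ) :
    Matrix (Fin n) (Fin n) ℝ :=
  ((1 - Λ)⁻¹)ᵀ * Φ * (1 - Λ)⁻¹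

/-- The covariance of variable `i` with the composite error
`ε = Σ_{p ∈ Pa(y)\X} Λ[p,y]·x_p + ε_y` of the equation of `y`:
`Σ_{p ∈ Pa(y)\X} Λ[p,y]·Σ[i,p] + ((I − Λ)⁻ᵀΦ)[i,y]`. -/
noncomputable def errorCov {n : ℕ} (E : Fin n → Fin n → Prop)
    (Λ Φ : Matrix (Fin n) (Fin n) ℝ) (y : Fin n) (X : Finset (Fin n))
    (i : Fin n) : ℝ :=
  (∑ p ∈ Finset.univ.filter (fun p => E p y ∧ p ∉ X),
      Λ p y * impliedCov Λ Φ i p)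
    + ((((1 - Λ)⁻¹)ᵀ * Φ : Matrix (Fin n) (Fin n) ℝ)) i y

/-!
Write `B = (I − Λ)⁻¹`, so that `Σ[i,p] = ∑ₛ B[s,i] Φ[s,s] B[s,p]` and
`((I − Λ)⁻ᵀΦ)[i,y] = B[y,i] Φ[y,y]`. Matrices whose `(u,v)` entry vanishes unless `v` is
reachable from `u` form a finite-dimensional subalgebra, hence one closed under inverses; so
`B[u,v] ≠ 0` only if there is a directed path `u → v`. A path `y → i` would give a trek with top
`y`. A nonzero term `B[s,i] B[s,p]`, with `p → y` a kept arrow, would give paths `s → i` and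
`s → p → y`. By acyclicity the latter visits `y` only at its end, so it uses no removed arrow;
if the former uses one, its part after the last visit to `y` does not. Either way there is a
trek from `i` to `y` in `G_X̄`.
-/

namespace Matrix

variable {ι : Type*} [Fintype ι] [DecidableEq ι]

def reachabilitySubalgebra (R : Type*) [CommSemiring R] (r : ι → ι → Prop) :
    Subalgebra R (Matrix ι ι R) where
  carrier := {M | ∀ u v, M u v ≠ 0 → Relation.ReflTransGen r u v}
  mul_mem' {M N} hM hN u v h := by
    obtain ⟨w, -, hw⟩ := Finset.exists_ne_zero_of_sum_ne_zero h
    exact (hM u w (left_ne_zero_of_mul hw)).trans (hN w v (right_ne_zero_of_mul hw))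
  add_mem' {M N} hM hN u v h := by
    by_cases hMuv : M u v = 0
    · exact hN u v (by simpa [hMuv] using h)
    · exact hM u v hMuv
  algebraMap_mem' c u v h := by
    by_cases huv : u = v
    · exact huv ▸ .refl
    · simp [algebraMap_eq_diagonal, huv] at h

theorem mem_reachabilitySubalgebra {R : Type*} [CommSemiring R] {r : ι → ι → Prop}
    {M : Matrix ι ι R} :
    M ∈ reachabilitySubalgebra R r ↔ ∀ u v, M u v ≠ 0 → Relation.ReflTransGen r u v :=
  Iff.rfl

/-- A unit of `Matrix ι ι K` lying in `S` is a non-zero-divisor of the finite-dimensional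
algebra `S`, hence a unit of `S`. -/
theorem inv_mem_subalgebra {K : Type*} [Field K] {S : Subalgebra K (Matrix ι ι K)}
    {A : Matrix ι ι K} (hA : A ∈ S) : A⁻¹ ∈ S := by
  by_cases hdet : IsUnit A.det
  · have hunit : IsUnit (⟨A, hA⟩ : S) :=
      IsArtinianRing.isUnit_of_nonZeroDivisor_of_isIntegral' (R := K)
        (comap_nonZeroDivisors_le_of_injective (f := S.subtype) Subtype.val_injective
          ((A.isUnit_iff_isUnit_det.mpr hdet).mem_nonZeroDivisors :))
    obtain ⟨B, hB⟩ := hunit.exists_right_inv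
    rw [inv_eq_right_inv (congrArg Subtype.val hB)]
    exact B.2
  · rw [nonsing_inv_apply_not_isUnit A hdet]
    exact S.zero_mem

theorem transpose_mul_diagonal_mul_apply {α : Type*} [NonUnitalNonAssocSemiring α]
    (A : Matrix ι ι α) (d : ι → α) (i j : ι) :
    (Aᵀ * diagonal d * A) i j = ∑ s, A s i * d s * A s j := by
  rw [mul_apply]
  simp only [mul_diagonal, transpose_apply]

end Matrix

theorem SupportedOn.reflTransGen_of_inv_one_sub_apply_ne_zero {n : ℕ}
    {E : Fin n → Fin n → Prop} {Λ : Matrix (Fin n) (Fin n) ℝ} (hΛ : SupportedOn E Λ)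
    {u v : Fin n} (h : (1 - Λ)⁻¹ u v ≠ 0) : Relation.ReflTransGen E u v := by
  have hΛ' : Λ ∈ Matrix.reachabilitySubalgebra ℝ E :=
    fun a b hab => .single (not_imp_comm.mp (hΛ a b) hab)
  exact Matrix.inv_mem_subalgebra (sub_mem (one_mem _) hΛ') u v h

namespace Relation.ReflTransGen

variable {α : Type*} {r r' : α → α → Prop} {y s t : α}

theorem lift_or_lift_from (hr : ∀ a b, r a b → b ≠ y → r' a b) (h : ReflTransGen r s t) :
    ReflTransGen r' s t ∨ ReflTransGen r' y t := by
  induction h with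
  | refl => exact .inl .refl
  | @tail b c _ hbc ih =>
    by_cases hc : c = y
    · exact .inr (hc ▸ .refl)
    · exact ih.imp (·.tail (hr b c hbc hc)) (·.tail (hr b c hbc hc))

theorem lift_of_not_reflTransGen (hr : ∀ a b, r a b → b ≠ y → r' a b)
    (hy : ¬ ReflTransGen r y t) (h : ReflTransGen r s t) : ReflTransGen r' s t := by
  induction h using head_induction_on with
  | refl => exact .refl
  | @head a b hab hbt ih =>
    have hb : b ≠ y := by rintro rfl; exact hy hbt
    exact .head (hr a b hab hb) ih

end Relation.ReflTransGen

namespace DTrek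

variable {n : ℕ} {E E' : Fin n → Fin n → Prop}

theorem exists_of_reflTransGen {t a b : Fin n} (ha : Relation.ReflTransGen E t a)
    (hb : Relation.ReflTransGen E t b) : ∃ τ : DTrek E, τ.src = a ∧ τ.dst = b := by
  obtain ⟨l, hl, hlc, hlt, hla⟩ := List.exists_isChain_ne_nil_of_relationReflTransGen ha
  obtain ⟨m, hm, hmc, hmt, hmb⟩ := List.exists_isChain_ne_nil_of_relationReflTransGen hb
  exact ⟨⟨l, m, hl, hm, hlc, hmc, hlt.trans hmt.symm⟩, hla, hmb⟩

theorem exists_of_reflTransGen_of_lift {s i y : Fin n} (hE : ∀ a b, E a b → b ≠ y → E' a b)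
    (hsi : Relation.ReflTransGen E s i) (hsy : Relation.ReflTransGen E' s y) :
    ∃ τ : DTrek E', τ.src = i ∧ τ.dst = y := by
  rcases hsi.lift_or_lift_from hE with hsi' | hyi'
  · exact exists_of_reflTransGen hsi' hsy
  · exact exists_of_reflTransGen hyi' .refl

end DTrek

section NoTrek

variable {n : ℕ} {E : Fin n → Fin n → Prop} {y i : Fin n} {X : Finset (Fin n)}

theorem no_common_ancestor_of_no_trek
    (hnotrek : ¬ ∃ t : DTrek (fun u v => E u v ∧ ¬ (u ∈ X ∧ v = y)), t.src = i ∧ t.dst = y)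
    {s : Fin n} (hsi : Relation.ReflTransGen E s i) :
    ¬ Relation.ReflTransGen (fun u v => E u v ∧ ¬ (u ∈ X ∧ v = y)) s y :=
  fun hsy => hnotrek (DTrek.exists_of_reflTransGen_of_lift (fun _ _ h hb => ⟨h, (hb ·.2)⟩) hsi hsy)

theorem not_reflTransGen_of_no_trek
    (hnotrek : ¬ ∃ t : DTrek (fun u v => E u v ∧ ¬ (u ∈ X ∧ v = y)), t.src = i ∧ t.dst = y) :
    ¬ Relation.ReflTransGen E y i :=
  fun hyi => no_common_ancestor_of_no_trek hnotrek hyi .refl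

theorem not_reflTransGen_parent_of_no_trek (hacyc : EAcyclic E)
    (hnotrek : ¬ ∃ t : DTrek (fun u v => E u v ∧ ¬ (u ∈ X ∧ v = y)), t.src = i ∧ t.dst = y)
    {p s : Fin n} (hpy : E p y) (hpX : p ∉ X) (hsi : Relation.ReflTransGen E s i) :
    ¬ Relation.ReflTransGen E s p := fun hsp =>
  have hyp : ¬ Relation.ReflTransGen E y p := fun hyp => hacyc y (.tail' hyp hpy)
  no_common_ancestor_of_no_trek hnotrek hsi
    ((hsp.lift_of_not_reflTransGen (fun _ _ h hb => ⟨h, (hb ·.2)⟩) hyp).tail ⟨hpy, (hpX ·.1)⟩)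

end NoTrek

theorem no_trek_implies_zero_error_covariance_general
    {n : ℕ} (E : Fin n → Fin n → Prop) (hacyc : EAcyclic E)
    (y : Fin n) (X : Finset (Fin n)) (i : Fin n)
    (hnotrek : ¬ ∃ t : DTrek (fun u v => E u v ∧ ¬ (u ∈ X ∧ v = y)),
      t.src = i ∧ t.dst = y) :
    ∀ Λ Φ : Matrix (Fin n) (Fin n) ℝ,
      SupportedOn E Λ → (∀ u v, u ≠ v → Φ u v = 0) → (∀ u, 0 < Φ u u) →
      errorCov E Λ Φ y X i = 0 := by
  intro Λ Φ hΛ hΦ _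
  rw [errorCov, impliedCov, ← Matrix.IsDiag.diagonal_diag hΦ]
  simp only [transpose_mul_diagonal_mul_apply, mul_diagonal, transpose_apply]
  have reach {u v : Fin n} : ¬ Relation.ReflTransGen E u v → (1 - Λ)⁻¹ u v = 0 :=
    not_imp_comm.mp hΛ.reflTransGen_of_inv_one_sub_apply_ne_zero
  rw [reach (not_reflTransGen_of_no_trek hnotrek), zero_mul, add_zero]
  refine Finset.sum_eq_zero fun p hp => mul_eq_zero_of_right _ (Finset.sum_eq_zero fun s _ => ?_)
  obtain ⟨-, hpy, hpX⟩ := Finset.mem_filter.mp hp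
  by_cases hsi : Relation.ReflTransGen E s i
  · rw [reach (not_reflTransGen_parent_of_no_trek hacyc hnotrek hpy hpX hsi), mul_zero]
  · rw [reach hsi, zero_mul, zero_mul]

/-- if there is no trek from `i` to `y` in the graph obtained by
deleting all arrows from `X` to `y`, then for all parameter values the
covariance of `i` with the composite error of the equation of `y` vanishes. -/
theorem no_trek_implies_zero_error_covariance
    {n : ℕ} (E : Fin n → Fin n → Prop) (hacyc : EAcyclic E)
    (y : Fin n) (X : Finset (Fin n)) (hX : ∀ x ∈ X, E x y) (i : Fin n)
    (hnotrek : ¬ ∃ t : DTrek (fun u v => E u v ∧ ¬ (u ∈ X ∧ v = y)),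
      t.src = i ∧ t.dst = y) :
    ∀ Λ Φ : Matrix (Fin n) (Fin n) ℝ,
      SupportedOn E Λ → (∀ u v, u ≠ v → Φ u v = 0) → (∀ u, 0 < Φ u u) →
      errorCov E Λ Φ y X i = 0 :=
  no_trek_implies_zero_error_covariance_general E hacyc y X i hnotrek
end
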